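/- arXiv:math/9907105 — 4 statements merged into one kernel-verified Lean document; each statement's English description precedes it below -/
import Mathlib

section
/- Let α, β be complex numbers with |α| ≥ |β| > 1, and let θ : ℂ² \ {0} → ℝ be the unique function satisfying |z₁|²·e^{−θ(z)·log|α|/π} + |z₂|²·e^{−θ(z)·log|β|/π} = 1. Then θ(α·z₁, β·z₂) = θ(z₁, z₂) + 2π for all (z₁, z₂) ∈ ℂ² \ {0}. -/
open Real Complex

lemma key_inj (A B a b : ℝ) (hA : 0 ≤ A) (hB : 0 ≤ B) (hAB : 0 < A ∨ 0 < B)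
    (ha : 0 < a) (hb : 0 < b) (t₁ t₂ : ℝ)
    (h : A * Real.exp (-t₁ * a) + B * Real.exp (-t₁ * b) =
         A * Real.exp (-t₂ * a) + B * Real.exp (-t₂ * b)) : t₁ = t₂ := by
  have hsa : StrictAnti fun t : ℝ => Real.exp (-t * a) := by
    intro x y hxy
    exact Real.exp_lt_exp.2 (by nlinarith)
  have hsb : StrictAnti fun t : ℝ => Real.exp (-t * b) := by
    intro x y hxy
    exact Real.exp_lt_exp.2 (by nlinarith)
  have hf : StrictAnti fun t : ℝ => A * Real.exp (-t * a) + B * Real.exp (-t * b) := by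
    rcases hAB with hA' | hB'
    · intro x y hxy
      have h1 : A * Real.exp (-y * a) < A * Real.exp (-x * a) :=
        mul_lt_mul_of_pos_left (hsa hxy) hA'
      have h2 : B * Real.exp (-y * b) ≤ B * Real.exp (-x * b) :=
        mul_le_mul_of_nonneg_left (hsb.antitone hxy.le) hB
      dsimp only
      linarith
    · intro x y hxy
      have h1 : A * Real.exp (-y * a) ≤ A * Real.exp (-x * a) :=
        mul_le_mul_of_nonneg_left (hsa.antitone hxy.le) hA
      have h2 : B * Real.exp (-y * b) < B * Real.exp (-x * b) :=
        mul_lt_mul_of_pos_left (hsb hxy) hB'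
      dsimp only
      linarith
  exact hf.injective h

theorem theta_equivariance (α β : ℂ)
    (hαβ : ‖β‖ ≤ ‖α‖) (hβ : 1 < ‖β‖)
    (θ : ℂ × ℂ → ℝ)
    (hθ : ∀ z : ℂ × ℂ, z ≠ 0 →
      (‖z.1‖) ^ 2 * Real.exp (-θ z * Real.log (‖α‖) / π) +
        (‖z.2‖) ^ 2 * Real.exp (-θ z * Real.log (‖β‖) / π) = 1)
    (z : ℂ × ℂ) (hz : z ≠ 0) :
    θ (α * z.1, β * z.2) = θ z + 2 * π := by
  have hα : 1 < ‖α‖ := lt_of_lt_of_le hβ hαβ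
  have hα0 : (0:ℝ) < ‖α‖ := by linarith
  have hβ0 : (0:ℝ) < ‖β‖ := by linarith
  have hla : 0 < Real.log (‖α‖) := Real.log_pos hα
  have hlb : 0 < Real.log (‖β‖) := Real.log_pos hβ
  set La := Real.log (‖α‖)
  set Lb := Real.log (‖β‖)
  have hαne : α ≠ 0 := by
    intro h; rw [h, norm_zero] at hα0; exact lt_irrefl _ hα0
  have hβne : β ≠ 0 := by
    intro h; rw [h, norm_zero] at hβ0; exact lt_irrefl _ hβ0
  set w : ℂ × ℂ := (α * z.1, β * z.2) with hw
  have hwne : w ≠ 0 := by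
    intro h
    apply hz
    have h1 : α * z.1 = 0 := congrArg Prod.fst h
    have h2 : β * z.2 = 0 := congrArg Prod.snd h
    have hz1 : z.1 = 0 := by
      rcases mul_eq_zero.1 h1 with h | h
      · exact absurd h hαne
      · exact h
    have hz2 : z.2 = 0 := by
      rcases mul_eq_zero.1 h2 with h | h
      · exact absurd h hβne
      · exact h
    exact Prod.ext hz1 hz2
  have hzpos : 0 < ‖z.1‖ ∨ 0 < ‖z.2‖ := by
    by_contra hc
    push_neg at hc
    apply hz
    have h1 : ‖z.1‖ = 0 := le_antisymm hc.1 (norm_nonneg _)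
    have h2 : ‖z.2‖ = 0 := le_antisymm hc.2 (norm_nonneg _)
    exact Prod.ext (norm_eq_zero.1 h1) (norm_eq_zero.1 h2)
  -- equation for w
  have hw1 := hθ w hwne
  -- show θ z + 2π satisfies same equation
  have hexp2a : Real.exp (2 * La) = (‖α‖) ^ 2 := by
    rw [two_mul, Real.exp_add, ← sq, Real.exp_log hα0]
  have hexp2b : Real.exp (2 * Lb) = (‖β‖) ^ 2 := by
    rw [two_mul, Real.exp_add, ← sq, Real.exp_log hβ0]
  have hz1eq : Real.exp (-(θ z + 2 * π) * La / π) =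
      Real.exp (-θ z * La / π) / (‖α‖) ^ 2 := by
    rw [eq_div_iff (by positivity), ← hexp2a, ← Real.exp_add]
    congr 1
    field_simp
    ring
  have hz2eq : Real.exp (-(θ z + 2 * π) * Lb / π) =
      Real.exp (-θ z * Lb / π) / (‖β‖) ^ 2 := by
    rw [eq_div_iff (by positivity), ← hexp2b, ← Real.exp_add]
    congr 1
    field_simp
    ring
  have hw2 : (‖w.1‖) ^ 2 * Real.exp (-(θ z + 2 * π) * La / π) +
      (‖w.2‖) ^ 2 * Real.exp (-(θ z + 2 * π) * Lb / π) = 1 := by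
    have hz' := hθ z hz
    rw [hz1eq, hz2eq]
    have hw1abs : ‖w.1‖ = ‖α‖ * ‖z.1‖ := norm_mul _ _
    have hw2abs : ‖w.2‖ = ‖β‖ * ‖z.2‖ := norm_mul _ _
    rw [hw1abs, hw2abs, mul_pow, mul_pow]
    have k1 : ‖α‖ ^ 2 * ‖z.1‖ ^ 2 *
        (Real.exp (-θ z * La / π) / ‖α‖ ^ 2) =
        ‖z.1‖ ^ 2 * Real.exp (-θ z * La / π) := by
      field_simp
    have k2 : ‖β‖ ^ 2 * ‖z.2‖ ^ 2 *
        (Real.exp (-θ z * Lb / π) / ‖β‖ ^ 2) =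
        ‖z.2‖ ^ 2 * Real.exp (-θ z * Lb / π) := by
      field_simp
    rw [k1, k2]
    exact hz'
  have hApos : 0 < (‖w.1‖) ^ 2 ∨ 0 < (‖w.2‖) ^ 2 := by
    rcases hzpos with h | h
    · left
      have : ‖w.1‖ = ‖α‖ * ‖z.1‖ := norm_mul _ _
      rw [this]; positivity
    · right
      have : ‖w.2‖ = ‖β‖ * ‖z.2‖ := norm_mul _ _
      rw [this]; positivity
  have hmain := key_inj ((‖w.1‖) ^ 2) ((‖w.2‖) ^ 2) (La / π) (Lb / π)
    (by positivity) (by positivity) hApos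
    (div_pos hla Real.pi_pos) (div_pos hlb Real.pi_pos)
    (θ w) (θ z + 2 * π) ?_
  · exact hmain
  · have e1 : ∀ t : ℝ, -t * (La / π) = -t * La / π := fun t => by ring
    have e2 : ∀ t : ℝ, -t * (Lb / π) = -t * Lb / π := fun t => by ring
    rw [e1, e2, e1, e2, hw1, hw2]
end

section
/- Let α, β be complex numbers with |α| ≥ |β| > 1, and define F : ℝ × S³ → ℂ² \ {0} by F(θ, (ξ₁, ξ₂)) = (e^{θ log α / 2π}·ξ₁, e^{θ log β / 2π}·ξ₂), where S³ = {(ξ₁,ξ₂) ∈ ℂ² : |ξ₁|² + |ξ₂|² = 1}. Then F is a bijection from ℝ × S³ onto ℂ² \ {0}. -/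
open Real Complex

private lemma sm_aux (c A : ℝ) (hc : 0 < c) (hA : 0 < A) :
    StrictMono fun t : ℝ => c * Real.exp (t * A) := fun x y hxy =>
  mul_lt_mul_of_pos_left (Real.exp_lt_exp.2 (mul_lt_mul_of_pos_right hxy hA)) hc

private lemma mo_aux (c A : ℝ) (hc : 0 ≤ c) (hA : 0 < A) :
    Monotone fun t : ℝ => c * Real.exp (t * A) := fun x y hxy =>
  mul_le_mul_of_nonneg_left (Real.exp_le_exp.2 (mul_le_mul_of_nonneg_right hxy hA.le)) hc

private lemma strict_aux (A B c₁ c₂ : ℝ) (hA : 0 < A) (hB : 0 < B)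
    (h1 : 0 ≤ c₁) (h2 : 0 ≤ c₂) (hsum : 0 < c₁ + c₂) :
    StrictMono (fun t : ℝ => c₁ * Real.exp (t * A) + c₂ * Real.exp (t * B)) := by
  rcases h1.lt_or_eq with hc1 | hc1
  · exact (sm_aux c₁ A hc1 hA).add_monotone (mo_aux c₂ B h2 hB)
  · have hc2 : 0 < c₂ := by linarith
    exact (mo_aux c₁ A h1 hA).add_strictMono (sm_aux c₂ B hc2 hB)

private lemma exists_aux (A B c₁ c₂ : ℝ) (hA : 0 < A) (hB : 0 < B)
    (h1 : 0 ≤ c₁) (h2 : 0 ≤ c₂) (hsum : 0 < c₁ + c₂) :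
    ∃ t : ℝ, c₁ * Real.exp (t * A) + c₂ * Real.exp (t * B) = 1 := by
  set g : ℝ → ℝ := fun t => c₁ * Real.exp (t * A) + c₂ * Real.exp (t * B) with hg
  have hgc : Continuous g := by fun_prop
  have hbot : Filter.Tendsto g Filter.atBot (nhds 0) := by
    have hA' : Filter.Tendsto (fun t : ℝ => Real.exp (t * A)) Filter.atBot (nhds 0) :=
      Real.tendsto_exp_atBot.comp (Filter.tendsto_id.atBot_mul_const hA)
    have hB' : Filter.Tendsto (fun t : ℝ => Real.exp (t * B)) Filter.atBot (nhds 0) :=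
      Real.tendsto_exp_atBot.comp (Filter.tendsto_id.atBot_mul_const hB)
    have := (hA'.const_mul c₁).add (hB'.const_mul c₂)
    simpa using this
  have htop : Filter.Tendsto g Filter.atTop Filter.atTop := by
    have hA' : Filter.Tendsto (fun t : ℝ => Real.exp (t * A)) Filter.atTop Filter.atTop :=
      Real.tendsto_exp_atTop.comp (Filter.tendsto_id.atTop_mul_const hA)
    have hB' : Filter.Tendsto (fun t : ℝ => Real.exp (t * B)) Filter.atTop Filter.atTop :=
      Real.tendsto_exp_atTop.comp (Filter.tendsto_id.atTop_mul_const hB)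
    rcases h1.lt_or_eq with hc1 | hc1
    · exact Filter.tendsto_atTop_add_right_of_le _ (0 : ℝ) (hA'.const_mul_atTop hc1)
        (fun t => mul_nonneg h2 (Real.exp_pos _).le)
    · have hc2 : 0 < c₂ := by linarith
      exact Filter.tendsto_atTop_add_left_of_le _ (0 : ℝ)
        (fun t => mul_nonneg h1 (Real.exp_pos _).le) (hB'.const_mul_atTop hc2)
  obtain ⟨a, ha⟩ : ∃ a, g a ≤ 1 := by
    have := hbot.eventually_le_const (by norm_num : (0:ℝ) < 1)
    rcases this.exists with ⟨a, ha⟩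
    exact ⟨a, ha⟩
  obtain ⟨b, hb⟩ : ∃ b, 1 ≤ g b := (htop.eventually_ge_atTop 1).exists
  have h1m : (1:ℝ) ∈ Set.Icc (g a) (g b) := ⟨ha, hb⟩
  obtain ⟨t, ht⟩ := intermediate_value_univ a b hgc h1m
  exact ⟨t, ht⟩

private lemma sq_transfer (x y a b : ℝ) (h : Real.exp x * a = Real.exp y * b) :
    a ^ 2 = Real.exp ((y - x) * 2) * b ^ 2 := by
  have hne : Real.exp x ≠ 0 := (Real.exp_pos x).ne'
  have key : a = Real.exp (y - x) * b := by
    calc a = Real.exp x * a / Real.exp x := by field_simp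
    _ = Real.exp y * b / Real.exp x := by rw [h]
    _ = Real.exp (y - x) * b := by rw [Real.exp_sub]; ring
  rw [key, show Real.exp ((y - x) * 2) = Real.exp (y - x) * Real.exp (y - x) by
    rw [← Real.exp_add]; ring_nf]
  ring

theorem F_bijective (α β : ℂ)
    (hαβ : ‖β‖ ≤ ‖α‖) (hβ : 1 < ‖β‖)
    (Lα Lβ : ℂ) (hLα : Complex.exp Lα = α) (hLβ : Complex.exp Lβ = β)
    (F : ℝ × {ξ : ℂ × ℂ // ‖ξ.1‖ ^ 2 + ‖ξ.2‖ ^ 2 = 1} → ℂ × ℂ)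
    (hF : ∀ θ ξ, F (θ, ξ) =
      (Complex.exp ((θ : ℂ) * Lα / (2 * π)) * ξ.1.1,
       Complex.exp ((θ : ℂ) * Lβ / (2 * π)) * ξ.1.2)) :
    Function.Injective F ∧ Set.range F = {z : ℂ × ℂ | z ≠ 0} := by
  have hπ : (0:ℝ) < π := Real.pi_pos
  have hα : 1 < ‖α‖ := lt_of_lt_of_le hβ hαβ
  have haexp : Real.exp Lα.re = ‖α‖ := by rw [← hLα, Complex.norm_exp]
  have hbexp : Real.exp Lβ.re = ‖β‖ := by rw [← hLβ, Complex.norm_exp]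
  have ha : 0 < Lα.re := by
    have : Real.exp 0 < Real.exp Lα.re := by rw [Real.exp_zero, haexp]; exact hα
    exact Real.exp_lt_exp.1 this
  have hb : 0 < Lβ.re := by
    have : Real.exp 0 < Real.exp Lβ.re := by rw [Real.exp_zero, hbexp]; exact hβ
    exact Real.exp_lt_exp.1 this
  have hA : 0 < Lα.re / (2 * π) := div_pos ha (by linarith)
  have hB : 0 < Lβ.re / (2 * π) := div_pos hb (by linarith)
  have habs : ∀ (θ : ℝ) (L : ℂ) (w : ℂ),
      ‖Complex.exp ((θ : ℂ) * L / (2 * π)) * w‖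
        = Real.exp (θ * (L.re / (2 * π))) * ‖w‖ := by
    intro θ L w
    rw [norm_mul, Complex.norm_exp]
    congr 1
    have h : ((θ : ℂ) * L / (2 * π)) = ((θ / (2 * π) : ℝ) : ℂ) * L := by
      push_cast; ring
    rw [h, Complex.re_ofReal_mul]
    ring
  constructor
  · -- injectivity
    rintro ⟨θ, ξ, hξ⟩ ⟨θ', ξ', hξ'⟩ heq
    rw [hF, hF] at heq
    simp only [Prod.mk.injEq] at heq
    obtain ⟨he1, he2⟩ := heq
    have h1 := congrArg norm he1
    have h2 := congrArg norm he2
    rw [habs θ Lα, habs θ' Lα] at h1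
    rw [habs θ Lβ, habs θ' Lβ] at h2
    have key1 := sq_transfer _ _ _ _ h1
    have key2 := sq_transfer _ _ _ _ h2
    have e1 : (θ' * (Lα.re / (2 * π)) - θ * (Lα.re / (2 * π))) * 2
        = (θ' - θ) * (2 * (Lα.re / (2 * π))) := by ring
    have e2 : (θ' * (Lβ.re / (2 * π)) - θ * (Lβ.re / (2 * π))) * 2
        = (θ' - θ) * (2 * (Lβ.re / (2 * π))) := by ring
    rw [e1] at key1
    rw [e2] at key2
    have hmono := strict_aux (2 * (Lα.re / (2 * π))) (2 * (Lβ.re / (2 * π)))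
      (‖ξ'.1‖ ^ 2) (‖ξ'.2‖ ^ 2)
      (by linarith) (by linarith) (sq_nonneg _) (sq_nonneg _) (by rw [hξ']; norm_num)
    have hteq : θ' - θ = 0 := by
      apply hmono.injective
      show ‖ξ'.1‖ ^ 2 * Real.exp ((θ' - θ) * (2 * (Lα.re / (2 * π))))
          + ‖ξ'.2‖ ^ 2 * Real.exp ((θ' - θ) * (2 * (Lβ.re / (2 * π))))
        = ‖ξ'.1‖ ^ 2 * Real.exp (0 * (2 * (Lα.re / (2 * π))))
          + ‖ξ'.2‖ ^ 2 * Real.exp (0 * (2 * (Lβ.re / (2 * π))))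
      simp only [zero_mul, Real.exp_zero, mul_one]
      linarith [key1, key2, hξ, hξ']
    have hθ : θ = θ' := by linarith
    subst hθ
    have hz1 : ξ.1 = ξ'.1 := mul_left_cancel₀ (Complex.exp_ne_zero _) he1
    have hz2 : ξ.2 = ξ'.2 := mul_left_cancel₀ (Complex.exp_ne_zero _) he2
    have hxx : ξ = ξ' := Prod.ext hz1 hz2
    simp [hxx]
  · -- range
    ext z
    simp only [Set.mem_range, Set.mem_setOf_eq]
    constructor
    · rintro ⟨⟨θ, ξ, hξ⟩, rfl⟩ h0
      rw [hF] at h0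
      obtain ⟨h01, h02⟩ := Prod.ext_iff.1 h0
      have hz1 : ξ.1 = 0 :=
        (mul_eq_zero.1 h01).resolve_left (Complex.exp_ne_zero _)
      have hz2 : ξ.2 = 0 :=
        (mul_eq_zero.1 h02).resolve_left (Complex.exp_ne_zero _)
      rw [hz1, hz2] at hξ
      simp at hξ
    · intro hz
      have hsum : 0 < ‖z.1‖ ^ 2 + ‖z.2‖ ^ 2 := by
        rcases eq_or_ne z.1 0 with h1 | h1
        · have h2 : z.2 ≠ 0 := fun h2 => hz (Prod.ext h1 h2)
          have hp : 0 < ‖z.2‖ ^ 2 := pow_pos (norm_pos_iff.2 h2) 2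
          have : (0:ℝ) ≤ ‖z.1‖ ^ 2 := sq_nonneg _
          linarith
        · have hp : 0 < ‖z.1‖ ^ 2 := pow_pos (norm_pos_iff.2 h1) 2
          have : (0:ℝ) ≤ ‖z.2‖ ^ 2 := sq_nonneg _
          linarith
      obtain ⟨t, ht⟩ := exists_aux (2 * (Lα.re / (2 * π))) (2 * (Lβ.re / (2 * π)))
        (‖z.1‖ ^ 2) (‖z.2‖ ^ 2)
        (by linarith) (by linarith) (sq_nonneg _) (sq_nonneg _) hsum
      have hmem : ‖Complex.exp ((t : ℂ) * Lα / (2 * π)) * z.1‖ ^ 2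
          + ‖Complex.exp ((t : ℂ) * Lβ / (2 * π)) * z.2‖ ^ 2 = 1 := by
        rw [habs t Lα z.1, habs t Lβ z.2]
        have ea : (Real.exp (t * (Lα.re / (2 * π))) * ‖z.1‖) ^ 2
            = ‖z.1‖ ^ 2 * Real.exp (t * (2 * (Lα.re / (2 * π)))) := by
          rw [mul_pow, show Real.exp (t * (2 * (Lα.re / (2 * π))))
            = Real.exp (t * (Lα.re / (2 * π))) * Real.exp (t * (Lα.re / (2 * π))) by
              rw [← Real.exp_add]; ring_nf]
          ring
        have eb : (Real.exp (t * (Lβ.re / (2 * π))) * ‖z.2‖) ^ 2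
            = ‖z.2‖ ^ 2 * Real.exp (t * (2 * (Lβ.re / (2 * π)))) := by
          rw [mul_pow, show Real.exp (t * (2 * (Lβ.re / (2 * π))))
            = Real.exp (t * (Lβ.re / (2 * π))) * Real.exp (t * (Lβ.re / (2 * π))) by
              rw [← Real.exp_add]; ring_nf]
          ring
        rw [ea, eb]
        linarith [ht]
      refine ⟨(-t, ⟨(Complex.exp ((t : ℂ) * Lα / (2 * π)) * z.1,
        Complex.exp ((t : ℂ) * Lβ / (2 * π)) * z.2), hmem⟩), ?_⟩
      rw [hF]
      have c1 : Complex.exp (((-t : ℝ) : ℂ) * Lα / (2 * π))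
          * (Complex.exp ((t : ℂ) * Lα / (2 * π)) * z.1) = z.1 := by
        rw [← mul_assoc, ← Complex.exp_add,
          show (((-t : ℝ) : ℂ) * Lα / (2 * π) + (t : ℂ) * Lα / (2 * π)) = 0 by
            push_cast; ring,
          Complex.exp_zero, one_mul]
      have c2 : Complex.exp (((-t : ℝ) : ℂ) * Lβ / (2 * π))
          * (Complex.exp ((t : ℂ) * Lβ / (2 * π)) * z.2) = z.2 := by
        rw [← mul_assoc, ← Complex.exp_add,
          show (((-t : ℝ) : ℂ) * Lβ / (2 * π) + (t : ℂ) * Lβ / (2 * π)) = 0 by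
            push_cast; ring,
          Complex.exp_zero, one_mul]
      exact Prod.ext c1 c2
end

section
/- Let m, n, c be integers with m·arg α = n·arg β + 2πc, where α, β are complex numbers with |α|, |β| > 1 and m·log|α| = n·log|β|. Define h̃ : ℝ × S³ → ℂP¹ by h̃(θ, ξ₁, ξ₂) = [e^{iθc}·ξ₁^m : ξ₂^n]. Then h̃ is constant along the curves (θ(t,s), ξ₁(t,s), ξ₂(t,s)) = (Θ − 4πt, Ξ₁·e^{2i(arg α)t − 2i(log|α|)s}, Ξ₂·e^{2i(arg β)t − 2i(log|β|)s}), i.e., h̃(θ(t,s), ξ₁(t,s), ξ₂(t,s)) = [e^{iΘc}·Ξ₁^m : Ξ₂^n] for all real t, s. -/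
open Real Complex

theorem htilde_constant_on_leaves (α β : ℂ)
    (hα : 1 < ‖α‖) (hβ : 1 < ‖β‖)
    (m n c : ℤ)
    (harg : (m : ℝ) * Complex.arg α = (n : ℝ) * Complex.arg β + 2 * π * (c : ℝ))
    (hlog : (m : ℝ) * Real.log (‖α‖) = (n : ℝ) * Real.log (‖β‖))
    (Θ : ℝ) (Ξ₁ Ξ₂ : ℂ) (hΞ : ‖Ξ₁‖ ^ 2 + ‖Ξ₂‖ ^ 2 = 1) :
    ∀ t s : ℝ,
      ∃ lam : ℂ, lam ≠ 0 ∧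
        ((Complex.exp (Complex.I * ((Θ - 4 * π * t : ℝ) : ℂ) * (c : ℂ)) *
            (Ξ₁ * Complex.exp (2 * Complex.I * (Complex.arg α) * t -
              2 * Complex.I * (Real.log (‖α‖)) * s)) ^ m,
          (Ξ₂ * Complex.exp (2 * Complex.I * (Complex.arg β) * t -
              2 * Complex.I * (Real.log (‖β‖)) * s)) ^ n) : ℂ × ℂ) =
        lam • ((Complex.exp (Complex.I * (Θ : ℂ) * (c : ℂ)) * Ξ₁ ^ m, Ξ₂ ^ n) : ℂ × ℂ) := by
  intro t s
  have h1 : (m : ℂ) * Complex.arg α = (n : ℂ) * Complex.arg β + 2 * π * (c : ℂ) := by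
    exact_mod_cast congrArg (Complex.ofReal ·) harg
  have h2 : (m : ℂ) * Real.log (‖α‖) = (n : ℂ) * Real.log (‖β‖) := by
    exact_mod_cast congrArg (Complex.ofReal ·) hlog
  refine ⟨Complex.exp (2 * Complex.I * (n : ℂ) * (Complex.arg β) * t -
      2 * Complex.I * (n : ℂ) * (Real.log (‖β‖)) * s),
    Complex.exp_ne_zero _, ?_⟩
  have hz : ∀ (z : ℂ) (k : ℤ), (Complex.exp z) ^ k = Complex.exp (k * z) := by
    intro z k; rw [← Complex.exp_int_mul]
  simp only [Prod.smul_mk, smul_eq_mul, Prod.mk.injEq, mul_zpow, hz]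
  constructor
  · rw [show Complex.I * ((Θ - 4 * π * t : ℝ) : ℂ) * (c : ℂ) = Complex.I * (Θ : ℂ) * (c : ℂ)
        + (- 4 * π * t * Complex.I * (c : ℂ)) by push_cast; ring,
      Complex.exp_add]
    rw [show (2 * Complex.I * (n : ℂ) * (Complex.arg β) * t -
        2 * Complex.I * (n : ℂ) * (Real.log (‖β‖)) * s) =
        (- 4 * π * t * Complex.I * (c : ℂ)) +
        ((m : ℂ) * (2 * Complex.I * (Complex.arg α) * t -
          2 * Complex.I * (Real.log (‖α‖)) * s)) by
      linear_combination (-2 * Complex.I * t) * h1 + (2 * Complex.I * s) * h2,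
      Complex.exp_add]
    ring
  · rw [mul_comm]
    congr 1
    ring
end

section
/- Let p, q, k, l, b, c, m', n' be integers with bk − cl = 1 and set arg α, arg β, log|α|, log|β| real numbers satisfying (k·arg α − l·arg β)/π = p/q and log|α|/log|β| = l/k with log|β| ≠ 0. Define F : ℝ² → (ℝ/2πℤ)³ by F(t,s) = (Θ − 4πt, 2(t·arg α − s·log|α|), 2(t·arg β − s·log|β|)) mod 2π. Then F is invariant under translation by the lattice generated by v = (q', (q'·arg β − p'cπ)/log|β|) and w = (0, kπ/log|β|), where (p', q') = (p, q) if p is odd and (p/2, q/2) if p is even. -/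
open Real

lemma addcircle_coe_eq (x y : ℝ) (n : ℤ) (h : x = y + n * (2 * π)) :
    (↑x : AddCircle (2 * π)) = ↑y := by
  rw [h, AddCircle.coe_add, add_eq_left, AddCircle.coe_eq_zero_iff]
  exact ⟨n, by push_cast [zsmul_eq_mul]; ring⟩

theorem lattice_invariance (p q k l b c p' q' : ℤ)
    (hq : q ≠ 0) (hk : k ≠ 0) (hb : b * k - c * l = 1)
    (hp'q' : (Odd p → p' = p ∧ q' = q) ∧ (Even p → 2 * p' = p ∧ 2 * q' = q))
    (argα argβ la lb : ℝ) (hlb : lb ≠ 0)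
    (h1 : ((k : ℝ) * argα - (l : ℝ) * argβ) / π = (p : ℝ) / (q : ℝ))
    (h2 : la / lb = (l : ℝ) / (k : ℝ))
    (Θ : ℝ)
    (F : ℝ × ℝ → AddCircle (2 * π) × AddCircle (2 * π) × AddCircle (2 * π))
    (hF : ∀ t s : ℝ, F (t, s) =
      (((Θ - 4 * π * t : ℝ) : AddCircle (2 * π)),
       ((2 * (t * argα - s * la) : ℝ) : AddCircle (2 * π)),
       ((2 * (t * argβ - s * lb) : ℝ) : AddCircle (2 * π)))) :
    ∀ t s : ℝ,
      F (t + (q' : ℝ), s + ((q' : ℝ) * argβ - (p' : ℝ) * (c : ℝ) * π) / lb) = F (t, s) ∧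
      F (t, s + (k : ℝ) * π / lb) = F (t, s) := by
  have hπ : (π : ℝ) ≠ 0 := Real.pi_ne_zero
  have hkR : (k : ℝ) ≠ 0 := Int.cast_ne_zero.mpr hk
  have hqR : (q : ℝ) ≠ 0 := Int.cast_ne_zero.mpr hq
  have hla : la = (l : ℝ) * lb / k := by
    field_simp at h2 ⊢
    linear_combination h2
  have hargα : argα = (π * p / q + l * argβ) / k := by
    field_simp at h1 ⊢
    linear_combination h1
  have hpq : (p : ℝ) * q' = (p' : ℝ) * q := by
    rcases Int.even_or_odd p with he | ho
    · obtain ⟨e1, e2⟩ := hp'q'.2 he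
      push_cast [← e1, ← e2]; ring
    · obtain ⟨e1, e2⟩ := hp'q'.1 ho
      rw [e1, e2]
  have hbR : (b : ℝ) * k - c * l = 1 := by exact_mod_cast hb
  have key2 : (q' : ℝ) * argα - ((q' : ℝ) * argβ - (p' : ℝ) * c * π) / lb * la
      = π * ((p' : ℝ) * b) := by
    rw [hargα, hla]
    field_simp
    linear_combination π * hpq - (π * (q : ℝ) * (p' : ℝ)) * hbR
  intro t s
  constructor
  · rw [hF, hF]
    simp only [Prod.mk.injEq]
    refine ⟨?_, ?_, ?_⟩
    · exact addcircle_coe_eq _ _ (-(2*q')) (by push_cast; ring)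
    · refine addcircle_coe_eq _ _ (p' * b) ?_
      push_cast
      linear_combination 2 * key2
    · refine addcircle_coe_eq _ _ (p' * c) ?_
      push_cast
      field_simp
      ring
  · rw [hF, hF]
    simp only [Prod.mk.injEq]
    refine ⟨?_, ?_, ?_⟩
    · trivial
    · refine addcircle_coe_eq _ _ (-l) ?_
      rw [hla]
      push_cast
      field_simp
      ring
    · refine addcircle_coe_eq _ _ (-k) ?_
      push_cast
      field_simp
      ring
end
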